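/- Let b,c be distinct vertices and a a third vertex of a Markov chain with p(b,a)=p(c,a)=1, d(b)=d(c)=1, b^{(1)}=c^{(1)}=a. Let h(v) = P_v(T_b < T_c) be the hitting probability, and suppose K_1 := 1 + (1/2) sum_{u not in {b,c}, v in V} d(u) p(u,v) |h(u)-h(v)| is finite. Then for any rotor walk started at a and any time t with n_t(b)+n_t(c) > 0, |h(a) - n_t(b)/(n_t(b)+n_t(c))| <= K_1/(n_t(b)+n_t(c)), where n_t(v) is the number of times s < t with x_s = v. -/

import Mathlib

open scoped BigOperators Classical

/-- `(x, r)` is a rotor walk for the rotor mechanism `(d, succ)`.  Rotor values are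
`0`-based: rotor value `j` at `u` means the rotor points to `succ u j`
(corresponding to `u^(j+1)` in `1`-based notation).  At each step the rotor at the
current particle position is incremented cyclically and the particle moves in the
new rotor direction. -/
def IsRotorWalk {V : Type*} (d : V → ℕ) (succ : V → ℕ → V)
    (x : ℕ → V) (r : ℕ → V → ℕ) : Prop :=
  (∀ v, r 0 v < d v) ∧
  (∀ t, r (t + 1) (x t) = (r t (x t) + 1) % d (x t)) ∧
  (∀ t v, v ≠ x t → r (t + 1) v = r t v) ∧
  (∀ t, x (t + 1) = succ (x t) (r (t + 1) (x t)))

/-- the number of visits of the walk `x` to `v` strictly before time `t` -/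
noncomputable def nvisits {V : Type*} (x : ℕ → V) (t : ℕ) (v : V) : ℕ :=
  ((Finset.range t).filter fun s => x s = v).card

/-- the rotor mechanism `(d, succ)` realizes the transition kernel `p`:
`p u v` is the proportion of the `d u` successors of `u` equal to `v` -/
def Realizes {V : Type*} (d : V → ℕ) (succ : V → ℕ → V) (p : V → V → ℝ) : Prop :=
  (∀ u, 0 < d u) ∧
  ∀ u v, p u v = ((Finset.range (d u)).filter fun i => succ u i = v).card / d u

/-- `hitAux p b c t v` is the probability, for the Markov chain with kernel `p`
started at `v`, of hitting `b` before hitting `c` and within `t` steps. -/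
noncomputable def hitAux {V : Type*} (p : V → V → ℝ) (b c : V) : ℕ → V → ℝ
  | 0, v => if v = b then 1 else 0
  | t + 1, v => if v = b then 1 else if v = c then 0 else ∑' w, p v w * hitAux p b c t w

/-- the hitting probability `h_{b,c}(v) = P_v(T_b < T_c)`, as the monotone limit of the
probabilities of hitting `b` before `c` within `t` steps.  (Taking `b = c` gives the
single-target hitting probability `P_v(T_b < ∞)`.) -/
noncomputable def hitProb {V : Type*} (p : V → V → ℝ) (b c : V) (v : V) : ℝ :=
  ⨆ t, hitAux p b c t v

/-- the escape probability `e_{u,v} = P_u(T_v < T_u^+)`: a first step from `u` to `w`,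
then hit `v` before `u`. -/
noncomputable def escProb {V : Type*} (p : V → V → ℝ) (u v : V) : ℝ :=
  ∑' w, p u w * hitProb p v u w

/-!
Telescoping `h` along the rotor walk, `h(x_t) - h(a)` is the sum over the vertices `u` of the
increments of `h` on the steps out of `u`.  A step out of `b` contributes `h(a) - 1` and a step
out of `c` contributes `h(a)`, so these two vertices account for `(n_b + n_c) h(a) - n_b`.  At any
other vertex `u` the rotor runs cyclically through the successors of `u`, so the increments out of
`u` are consecutive terms of a `d(u)`-periodic sequence whose period sums to zero, `h` being
harmonic at `u`; their sum is therefore at most half of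
`∑_j |h(u^(j)) - h(u)| = ∑_v d(u) p(u,v) |h(u) - h(v)|` in absolute value.  Together with
`|h(x_t) - h(a)| ≤ 1` this bounds `|(n_b + n_c) h(a) - n_b|` by `K₁`.
-/

open Finset Filter Topology

theorem abs_sum_le_half_sum_abs_of_subset {ι : Type*} {s t : Finset ι} (hst : s ⊆ t)
    (f : ι → ℝ) (hf : ∑ i ∈ t, f i = 0) : |∑ i ∈ s, f i| ≤ 1 / 2 * ∑ i ∈ t, |f i| := by
  have hcompl : ∑ i ∈ t \ s, f i = -∑ i ∈ s, f i := by
    linarith [sum_sdiff hst (f := f)]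
  have hs : |∑ i ∈ s, f i| ≤ ∑ i ∈ s, |f i| := abs_sum_le_sum_abs _ _
  have hts : |∑ i ∈ s, f i| ≤ ∑ i ∈ t \ s, |f i| := by
    rw [← abs_neg, ← hcompl]
    exact abs_sum_le_sum_abs _ _
  linarith [sum_sdiff hst (f := fun i => |f i|)]

theorem sum_Ico_mod {M : Type*} [AddCommMonoid M] (g : ℕ → M) (k d : ℕ) :
    ∑ i ∈ Ico k (k + d), g (i % d) = ∑ j ∈ range d, g j := by
  rw [← Nat.image_Ico_mod k d, sum_image (Nat.mod_injOn_Ico k d)]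

theorem abs_sum_Ico_mod_le {d : ℕ} (hd : 0 < d) {g : ℕ → ℝ} (hg : ∑ j ∈ range d, g j = 0)
    (k n : ℕ) : |∑ i ∈ Ico k (k + n), g (i % d)| ≤ 1 / 2 * ∑ j ∈ range d, |g j| := by
  have hperiodic : Function.Periodic (fun m => ∑ i ∈ Ico k (k + m), g (i % d)) d := fun m => by
    dsimp only
    rw [← add_assoc, ← sum_Ico_consecutive _ (by omega : k ≤ k + m) (by omega : k + m ≤ k + m + d),
      sum_Ico_mod, hg, add_zero]
  have hsub : Ico k (k + n % d) ⊆ Ico k (k + d) :=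
    Ico_subset_Ico_right (by have := Nat.mod_lt n hd; omega)
  rw [← hperiodic.map_mod_nat n, ← sum_image ((Nat.mod_injOn_Ico k d).mono (coe_subset.2 hsub))]
  refine abs_sum_le_half_sum_abs_of_subset ?_ g hg
  rw [← Nat.image_Ico_mod k d]
  exact image_subset_image hsub

theorem sum_tsum_le_tsum_prod {α β : Type*} {f : α × β → ℝ} (hf : Summable f)
    (hf0 : ∀ z, 0 ≤ f z) (s : Finset α) : ∑ a ∈ s, ∑' b, f (a, b) ≤ ∑' z, f z := by
  rw [hf.tsum_prod' hf.prod_factor]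
  exact hf.prod.sum_le_tsum s fun a _ => tsum_nonneg fun b => hf0 (a, b)

section RotorWalk

variable {V : Type*} {d : V → ℕ} {succ : V → ℕ → V}

section Realizes

variable {p : V → V → ℝ}

theorem Realizes.nonneg (hreal : Realizes d succ p) (u v : V) : 0 ≤ p u v := by
  rw [hreal.2 u v]
  positivity

theorem Realizes.tsum_mul (hreal : Realizes d succ p) (u : V) (g : V → ℝ) :
    ∑' w, p u w * g w = (∑ j ∈ range (d u), g (succ u j)) / d u := by
  rw [tsum_eq_sum (s := (range (d u)).image (succ u)), sum_comp, sum_div]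
  · refine sum_congr rfl fun w _ => ?_
    rw [hreal.2 u w, nsmul_eq_mul]
    ring
  · intro w hw
    have hfiber : (range (d u)).filter (fun i => succ u i = w) = ∅ :=
      filter_eq_empty_iff.2 fun i hi hiw => hw (mem_image.2 ⟨i, hi, hiw⟩)
    rw [hreal.2 u w, hfiber]
    simp

theorem Realizes.sum_abs_sub_eq_tsum (hreal : Realizes d succ p) (g : V → ℝ) (u : V) :
    ∑ j ∈ range (d u), |g (succ u j) - g u| = ∑' v, d u * p u v * |g u - g v| := by
  have hd : (d u : ℝ) ≠ 0 := by exact_mod_cast (hreal.1 u).ne'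
  simp_rw [mul_assoc]
  rw [tsum_mul_left, hreal.tsum_mul, mul_div_cancel₀ _ hd]
  simp_rw [abs_sub_comm]

theorem Realizes.sum_sum_abs_sub_le_tsum (hreal : Realizes d succ p) (g : V → ℝ) {b c : V}
    (hsum : Summable fun uv : V × V =>
      if uv.1 = b ∨ uv.1 = c then 0 else (d uv.1 : ℝ) * p uv.1 uv.2 * |g uv.1 - g uv.2|)
    {U : Finset V} (hU : ∀ u ∈ U, ¬(u = b ∨ u = c)) :
    ∑ u ∈ U, ∑ j ∈ range (d u), |g (succ u j) - g u| ≤ ∑' uv : V × V,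
      if uv.1 = b ∨ uv.1 = c then 0 else (d uv.1 : ℝ) * p uv.1 uv.2 * |g uv.1 - g uv.2| := by
  have hnonneg : ∀ uv : V × V, 0 ≤
      if uv.1 = b ∨ uv.1 = c then 0 else (d uv.1 : ℝ) * p uv.1 uv.2 * |g uv.1 - g uv.2| := by
    intro uv
    split_ifs
    · exact le_rfl
    · exact mul_nonneg (mul_nonneg (Nat.cast_nonneg _) (hreal.nonneg _ _)) (abs_nonneg _)
  refine le_of_eq_of_le (sum_congr rfl fun u hu => ?_) (sum_tsum_le_tsum_prod hsum hnonneg U)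
  simp only [if_neg (hU u hu)]
  exact hreal.sum_abs_sub_eq_tsum g u

end Realizes

section hitProb

variable {p : V → V → ℝ} {b c : V}

theorem hitAux_succ_of_ne (s : ℕ) {v : V} (hvb : v ≠ b) (hvc : v ≠ c) :
    hitAux p b c (s + 1) v = ∑' w, p v w * hitAux p b c s w := by
  rw [hitAux, if_neg hvb, if_neg hvc]

theorem hitAux_mem_Icc (hreal : Realizes d succ p) (s : ℕ) (v : V) :
    hitAux p b c s v ∈ Set.Icc 0 1 := by
  induction s generalizing v with
  | zero => unfold hitAux; split_ifs <;> norm_num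
  | succ s ih =>
    rw [hitAux]
    split_ifs with hvb hvc
    · norm_num
    · norm_num
    have hd : (0 : ℝ) < d v := by exact_mod_cast hreal.1 v
    rw [hreal.tsum_mul, Set.mem_Icc, le_div_iff₀ hd, div_le_one hd, zero_mul]
    constructor
    · exact sum_nonneg fun j _ => (ih _).1
    · simpa using sum_le_sum fun j (_ : j ∈ range (d v)) => (ih (succ v j)).2

theorem hitAux_le_hitAux_succ (hreal : Realizes d succ p) (s : ℕ) (v : V) :
    hitAux p b c s v ≤ hitAux p b c (s + 1) v := by
  induction s generalizing v with
  | zero =>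
    by_cases hvb : v = b
    · simp [hitAux, hvb]
    · simpa [hitAux, hvb] using (hitAux_mem_Icc (b := b) (c := c) hreal 1 v).1
  | succ s ih =>
    rw [hitAux, hitAux]
    split_ifs
    · rfl
    · rfl
    rw [hreal.tsum_mul, hreal.tsum_mul]
    gcongr with j
    exact ih _

theorem tendsto_hitAux_hitProb (hreal : Realizes d succ p) (v : V) :
    Tendsto (fun s => hitAux p b c s v) atTop (𝓝 (hitProb p b c v)) :=
  tendsto_atTop_ciSup (monotone_nat_of_le_succ fun s => hitAux_le_hitAux_succ hreal s v)
    ⟨1, Set.forall_mem_range.2 fun s => (hitAux_mem_Icc hreal s v).2⟩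

theorem hitProb_mem_Icc (hreal : Realizes d succ p) (v : V) : hitProb p b c v ∈ Set.Icc 0 1 :=
  isClosed_Icc.mem_of_tendsto (tendsto_hitAux_hitProb hreal v)
    (Eventually.of_forall fun s => hitAux_mem_Icc hreal s v)

theorem hitProb_apply_left : hitProb p b c b = 1 := by
  have hb : ∀ s, hitAux p b c s b = 1 := fun s => by cases s <;> simp [hitAux]
  simp [hitProb, hb]

theorem hitProb_apply_right (hbc : b ≠ c) : hitProb p b c c = 0 := by
  have hc : ∀ s, hitAux p b c s c = 0 := fun s => by cases s <;> simp [hitAux, hbc.symm]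
  simp [hitProb, hc]

theorem sum_hitProb_sub_eq_zero (hreal : Realizes d succ p) {u : V} (hub : u ≠ b)
    (huc : u ≠ c) : ∑ j ∈ range (d u), (hitProb p b c (succ u j) - hitProb p b c u) = 0 := by
  have hd : (d u : ℝ) ≠ 0 := by exact_mod_cast (hreal.1 u).ne'
  have hlim : Tendsto (fun s => hitAux p b c (s + 1) u) atTop
      (𝓝 ((∑ j ∈ range (d u), hitProb p b c (succ u j)) / d u)) := by
    simp_rw [hitAux_succ_of_ne _ hub huc, hreal.tsum_mul]
    exact (tendsto_finsetSum _ fun j _ => tendsto_hitAux_hitProb hreal _).div_const _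
  have hmean := tendsto_nhds_unique
    ((tendsto_hitAux_hitProb hreal u).comp (tendsto_add_atTop_nat 1)) hlim
  rw [sum_sub_distrib, sum_const, card_range, nsmul_eq_mul, hmean, mul_div_cancel₀ _ hd, sub_self]

end hitProb

noncomputable def exitIncrement (x : ℕ → V) (g : V → ℝ) (t : ℕ) (u : V) : ℝ :=
  ∑ s ∈ (range t).filter (fun s => x s = u), (g (x (s + 1)) - g u)

theorem sub_eq_sum_exitIncrement (x : ℕ → V) (g : V → ℝ) {t : ℕ} {T : Finset V}
    (hT : ∀ s < t, x s ∈ T) : g (x t) - g (x 0) = ∑ u ∈ T, exitIncrement x g t u := by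
  rw [← sum_range_sub (fun s => g (x s)),
    ← sum_fiberwise_of_maps_to fun s hs => hT s (mem_range.1 hs)]
  refine sum_congr rfl fun u _ => sum_congr rfl fun s hs => ?_
  rw [(mem_filter.1 hs).2]

theorem nvisits_succ (x : ℕ → V) (t : ℕ) (v : V) :
    nvisits x (t + 1) v = nvisits x t v + if x t = v then 1 else 0 := by
  unfold nvisits
  rw [range_add_one, filter_insert]
  split_ifs
  · exact card_insert_of_notMem (by simp)
  · rfl

namespace IsRotorWalk

variable {x : ℕ → V} {r : ℕ → V → ℕ}

theorem rotor_eq (hwalk : IsRotorWalk d succ x r) (s : ℕ) (u : V) :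
    r s u = (r 0 u + nvisits x s u) % d u := by
  induction s generalizing u with
  | zero => simp [nvisits, Nat.mod_eq_of_lt (hwalk.1 u)]
  | succ s ih =>
    rw [nvisits_succ]
    by_cases hxu : x s = u
    · subst hxu
      rw [hwalk.2.1 s, ih (x s), if_pos rfl, Nat.mod_add_mod, add_assoc]
    · rw [hwalk.2.2.1 s u (Ne.symm hxu), ih u, if_neg hxu, add_zero]

/-- The `m`-th exit from `u` (counting from `0`) follows the rotor value `r 0 u + 1 + m`. -/
theorem exitIncrement_eq (hwalk : IsRotorWalk d succ x r) (g : V → ℝ) (t : ℕ) (u : V) :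
    exitIncrement x g t u =
      ∑ i ∈ Ico (r 0 u + 1) (r 0 u + 1 + nvisits x t u), (g (succ u (i % d u)) - g u) := by
  induction t with
  | zero => simp [exitIncrement, nvisits]
  | succ t ih =>
    unfold exitIncrement at ih ⊢
    rw [range_add_one, filter_insert, nvisits_succ]
    by_cases hxu : x t = u
    · have hexit : x (t + 1) = succ u ((r 0 u + 1 + nvisits x t u) % d u) := by
        rw [hwalk.2.2.2 t, hxu, hwalk.rotor_eq, nvisits_succ, if_pos hxu]
        ring_nf
      rw [if_pos hxu, sum_insert (by simp), ih, if_pos hxu, ← add_assoc,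
        sum_Ico_succ_top (by omega), hexit, add_comm]
    · rw [if_neg hxu, ih, if_neg hxu, add_zero]

theorem exitIncrement_eq_nvisits_mul (hwalk : IsRotorWalk d succ x r) (g : V → ℝ) (t : ℕ)
    {u : V} (hu : d u = 1) :
    exitIncrement x g t u = nvisits x t u * (g (succ u 0) - g u) := by
  simp [hwalk.exitIncrement_eq, hu, Nat.mod_one, mul_sub]

theorem abs_exitIncrement_le (hwalk : IsRotorWalk d succ x r) {g : V → ℝ} {u : V}
    (hg : ∑ j ∈ range (d u), (g (succ u j) - g u) = 0) (t : ℕ) :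
    |exitIncrement x g t u| ≤ 1 / 2 * ∑ j ∈ range (d u), |g (succ u j) - g u| := by
  rw [hwalk.exitIncrement_eq]
  exact abs_sum_Ico_mod_le (Nat.zero_lt_of_lt (hwalk.1 u)) hg _ _

theorem abs_sum_exitIncrement_le (hwalk : IsRotorWalk d succ x r) {p : V → V → ℝ}
    (hreal : Realizes d succ p) {g : V → ℝ} {b c : V}
    (hsum : Summable fun uv : V × V =>
      if uv.1 = b ∨ uv.1 = c then 0 else (d uv.1 : ℝ) * p uv.1 uv.2 * |g uv.1 - g uv.2|)
    {U : Finset V} (hU : ∀ u ∈ U, ¬(u = b ∨ u = c))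
    (hharm : ∀ u ∈ U, ∑ j ∈ range (d u), (g (succ u j) - g u) = 0) (t : ℕ) :
    |∑ u ∈ U, exitIncrement x g t u| ≤ 1 / 2 * ∑' uv : V × V,
      if uv.1 = b ∨ uv.1 = c then 0 else (d uv.1 : ℝ) * p uv.1 uv.2 * |g uv.1 - g uv.2| :=
  calc _ ≤ ∑ u ∈ U, |exitIncrement x g t u| := abs_sum_le_sum_abs _ _
    _ ≤ ∑ u ∈ U, 1 / 2 * ∑ j ∈ range (d u), |g (succ u j) - g u| :=
      sum_le_sum fun u hu => hwalk.abs_exitIncrement_le (hharm u hu) t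
    _ ≤ _ := by
      rw [← mul_sum]
      exact mul_le_mul_of_nonneg_left (hreal.sum_sum_abs_sub_le_tsum g hsum hU) (by norm_num)

theorem sub_eq_nvisits_add_sum_exitIncrement (hwalk : IsRotorWalk d succ x r) (g : V → ℝ) {b c : V} (hbc : b ≠ c)
    (hdb : d b = 1) (hdc : d c = 1) (t : ℕ) :
    g (x t) - g (x 0) = nvisits x t b * (g (succ b 0) - g b) +
      nvisits x t c * (g (succ c 0) - g c) +
      ∑ u ∈ (range t).image x \ {b, c}, exitIncrement x g t u := by
  rw [sub_eq_sum_exitIncrement x g (T := (range t).image x ∪ {b, c})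
      fun s hs => mem_union_left _ (mem_image_of_mem x (mem_range.2 hs)),
    ← sum_sdiff subset_union_right, union_sdiff_right, sum_pair hbc,
    hwalk.exitIncrement_eq_nvisits_mul g t hdb, hwalk.exitIncrement_eq_nvisits_mul g t hdc]
  ring

end IsRotorWalk

end RotorWalk

theorem rotor_hitting_prob_general {V : Type*}
    (d : V → ℕ) (succ : V → ℕ → V) (p : V → V → ℝ)
    (hreal : Realizes d succ p)
    (a b c : V) (hbc : b ≠ c)
    (hdb : d b = 1) (hdc : d c = 1) (hsb : succ b 0 = a) (hsc : succ c 0 = a)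
    (h : V → ℝ) (hh : h = hitProb p b c)
    (K₁ : ℝ)
    (hsum : Summable fun uv : V × V =>
      if uv.1 = b ∨ uv.1 = c then 0
      else (d uv.1 : ℝ) * p uv.1 uv.2 * |h uv.1 - h uv.2|)
    (hK₁ : K₁ = 1 + (1 / 2) * ∑' uv : V × V,
      if uv.1 = b ∨ uv.1 = c then 0
      else (d uv.1 : ℝ) * p uv.1 uv.2 * |h uv.1 - h uv.2|)
    (x : ℕ → V) (r : ℕ → V → ℕ) (hwalk : IsRotorWalk d succ x r) (hx0 : x 0 = a)
    (t : ℕ) (hn : 0 < nvisits x t b + nvisits x t c) :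
    |h a - (nvisits x t b : ℝ) / ((nvisits x t b : ℝ) + nvisits x t c)| ≤
      K₁ / ((nvisits x t b : ℝ) + nvisits x t c) := by
  set N : ℝ := (nvisits x t b : ℝ) + nvisits x t c
  set U := (range t).image x \ {b, c}
  have hU : ∀ u ∈ U, ¬(u = b ∨ u = c) := fun u hu => by simpa using (mem_sdiff.1 hu).2
  have hmem : ∀ v, h v ∈ Set.Icc 0 1 := by rw [hh]; exact hitProb_mem_Icc hreal
  have hidentity : N * h a - nvisits x t b = h (x t) - h a - ∑ u ∈ U, exitIncrement x h t u := by
    have htel := hwalk.sub_eq_nvisits_add_sum_exitIncrement h hbc hdb hdc t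
    rw [hsb, hsc, hx0, hh, hitProb_apply_left, hitProb_apply_right hbc, ← hh] at htel
    linarith
  have hharm : ∀ u ∈ U, ∑ j ∈ range (d u), (h (succ u j) - h u) = 0 := fun u hu => by
    rw [hh]
    exact sum_hitProb_sub_eq_zero hreal (not_or.1 (hU u hu)).1 (not_or.1 (hU u hu)).2
  have hexits := hwalk.abs_sum_exitIncrement_le hreal hsum hU hharm t
  have hmain : |N * h a - nvisits x t b| ≤ K₁ := by
    rw [hidentity, hK₁]
    calc _ ≤ |h (x t) - h a| + |∑ u ∈ U, exitIncrement x h t u| := abs_sub _ _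
      _ ≤ _ := add_le_add (abs_sub_le_of_nonneg_of_le (hmem _).1 (hmem _).2
          (hmem _).1 (hmem _).2) hexits
  have hN : 0 < N := by simp only [N]; exact_mod_cast hn
  rw [show h a - nvisits x t b / N = (N * h a - nvisits x t b) / N by field_simp, abs_div,
    abs_of_pos hN]
  exact div_le_div_of_nonneg_right hmain hN.le

/-- **Hitting probabilities** (Theorem `hit-prob`). -/
theorem rotor_hitting_prob {V : Type*} [Countable V]
    (d : V → ℕ) (succ : V → ℕ → V) (p : V → V → ℝ)
    (hreal : Realizes d succ p)
    (a b c : V) (hbc : b ≠ c) (hab : a ≠ b) (hac : a ≠ c)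
    (hpb : p b a = 1) (hpc : p c a = 1)
    (hdb : d b = 1) (hdc : d c = 1) (hsb : succ b 0 = a) (hsc : succ c 0 = a)
    (h : V → ℝ) (hh : h = hitProb p b c)
    (K₁ : ℝ)
    (hsum : Summable fun uv : V × V =>
      if uv.1 = b ∨ uv.1 = c then 0
      else (d uv.1 : ℝ) * p uv.1 uv.2 * |h uv.1 - h uv.2|)
    (hK₁ : K₁ = 1 + (1 / 2) * ∑' uv : V × V,
      if uv.1 = b ∨ uv.1 = c then 0
      else (d uv.1 : ℝ) * p uv.1 uv.2 * |h uv.1 - h uv.2|)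
    (x : ℕ → V) (r : ℕ → V → ℕ) (hwalk : IsRotorWalk d succ x r) (hx0 : x 0 = a)
    (t : ℕ) (hn : 0 < nvisits x t b + nvisits x t c) :
    |h a - (nvisits x t b : ℝ) / ((nvisits x t b : ℝ) + nvisits x t c)| ≤
      K₁ / ((nvisits x t b : ℝ) + nvisits x t c) :=
  rotor_hitting_prob_general d succ p hreal a b c hbc hdb hdc hsb hsc h hh K₁ hsum hK₁ x r hwalk hx0
    t hn
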